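/- arXiv:1803.11066 — 3 statements merged into one kernel-verified Lean document; each statement's English description precedes it below -/
import Mathlib

section
/- Let p be an odd prime. Every coefficient of the polynomial G^{(α)}(X) ∈ F_p(α)[X] belongs to the subring F_p[α, (α^{p−1} − 1)^{−1}] of F_p(α); equivalently, for each 1 ≤ k ≤ p−1 there exist a polynomial f_k(α) ∈ F_p[α] and a nonnegative integer m_k such that the coefficient of X^k in G^{(α)}(X) equals f_k(α)/(α^{p−1} − 1)^{m_k}. -/
noncomputable def binomF {K : Type*} [Field K] (f : K) (m : ℕ) : K :=
  Polynomial.eval f (descPochhammer K m) / (m.factorial : K)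

noncomputable def bF (p : ℕ) {K : Type*} [Field K] (r s : ℕ) (a : K) : K :=
  ∑ k ∈ Finset.range p,
    (-(r : K) / (s : K)) ^ k * binomF ((r : K) * a - 1) (p - 1 - k) *
      binomF ((s : K) * a - 1) k

noncomputable def Gpoly (p : ℕ) {K : Type*} [Field K] (a : K) : Polynomial K :=
  -∑ k ∈ Finset.Icc 1 (p - 1),
    Polynomial.C ((k : K)⁻¹ / ∏ s ∈ Finset.Icc 1 (k - 1), bF p 1 s a) * Polynomial.X ^ k

/-!
Write `bₛ(α) = b_{1,s}(α) ∈ 𝔽_p[α]`. For `1 ≤ s ≤ p - 2` we show `bₛ(α) bₛ(-α) = 1 - α^{p-1}`;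
then `∏_{s<k} bₛ` divides `(α^{p-1} - 1)^{k-1}`, which is the claim.

Both sides of the identity have degree `≤ p - 1` once `deg bₛ ≤ (p - 1)/2`, so it suffices to
compare values on `𝔽_p`. At `0` the left side is a geometric sum equal to `1`. For `a ≠ 0` one of
`bₛ(a)`, `bₛ(-a)` vanishes: every term of `bₛ(a)` contains a binomial coefficient `C(c, m)` with
`c ∈ 𝔽_p`, which vanishes when `c.val < m`, and `(a - 1).val + (-a - 1).val = p - 2` makes this
happen at `a` or at `-a`.

For the degree bound, `bₛ` is the `t^{p-1}`-coefficient of `(1 + t)^{α-1} (1 - t/s)^{sα-1}`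
(truncated below `t^p`), and `α ↦ α + 1` multiplies this series by `(1 + t)(1 - t/s)^s = 1 + O(t²)`.
Comparing coefficients of `α^{e-1}`, where `e < p` is the degree of the `tⁿ`-coefficient, forces
`e ≤ n / 2`.
-/

open Polynomial Finset
open scoped Nat

theorem Polynomial.coeff_comp_X_add_one {R : Type*} [CommRing R] (f : R[X]) (e : ℕ)
    (hf : f.natDegree ≤ e + 1) :
    (f.comp (X + 1)).coeff e = f.coeff e + (e + 1 : ℕ) * f.coeff (e + 1) := by
  have hderiv : (hasseDeriv e f).natDegree < 2 := by
    have := natDegree_hasseDeriv_le f e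
    omega
  rw [← map_one C, ← taylor_apply, taylor_coeff, eval_eq_sum_range' hderiv,
    sum_range_succ, sum_range_one]
  simp only [hasseDeriv_coeff, one_pow, mul_one, zero_add, Nat.choose_self, add_comm 1 e,
    Nat.choose_succ_self_right]
  push_cast
  ring

theorem descPochhammer_succ_comp_add_one {R : Type*} [CommRing R] (m : ℕ) (q : R[X]) :
    (descPochhammer R (m + 1)).comp (q + 1) =
      (descPochhammer R (m + 1)).comp q + (m + 1 : R[X]) * (descPochhammer R m).comp q := by
  have h := congrArg (·.comp (q + 1)) (descPochhammer_succ_comp_X_sub_one R m)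
  simp only [sub_comp, comp_assoc, X_comp, add_sub_cancel_right, smul_eq_mul, mul_comp,
    add_comp, natCast_comp, one_comp] at h
  rw [h]
  ring

theorem descPochhammer_eval_neg_one (R : Type*) [Ring R] (m : ℕ) :
    (descPochhammer R m).eval (-1) = (-1) ^ m * m ! := by
  have h := ascPochhammer_eval_neg_eq_descPochhammer R (-1) m
  rw [neg_neg, ascPochhammer_eval_one] at h
  rw [h, ← mul_assoc, ← pow_add, Even.neg_one_pow ⟨m, rfl⟩, one_mul]

namespace PowerSeries

variable {R : Type*} [CommRing R] {n : ℕ} {F G : R⟦X⟧}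

theorem coeff_eq_of_smodEq_X_pow (h : F ≡ G [SMOD Ideal.span {X ^ n}]) {m : ℕ} (hm : m < n) :
    coeff m F = coeff m G := by
  rw [SModEq.sub_mem, Ideal.mem_span_singleton, X_pow_dvd_iff] at h
  simpa [sub_eq_zero] using h m hm

theorem smodEq_X_pow_of_coeff_eq (h : ∀ m < n, coeff m F = coeff m G) :
    F ≡ G [SMOD Ideal.span {X ^ n}] := by
  rw [SModEq.sub_mem, Ideal.mem_span_singleton, X_pow_dvd_iff]
  simpa [sub_eq_zero] using h

theorem rescale_smodEq_X_pow (a : R) (h : F ≡ G [SMOD Ideal.span {X ^ n}]) :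
    rescale a F ≡ rescale a G [SMOD Ideal.span {X ^ n}] := by
  rw [SModEq.sub_mem, Ideal.mem_span_singleton] at h ⊢
  have hX : X ^ n ∣ rescale a (X ^ n) := by
    rw [map_pow, rescale_X, mul_pow]
    exact dvd_mul_left _ _
  exact map_sub (rescale a) F G ▸ hX.trans (map_dvd (rescale a) h)

end PowerSeries

theorem RatFunc.exists_inv_algebraMap_eq_div_pow {F : Type*} [Field F] {P D : F[X]} {m : ℕ}
    (hD : D ≠ 0) (hP : P ∣ D ^ m) :
    ∃ f : F[X], (algebraMap F[X] (RatFunc F) P)⁻¹ =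
      algebraMap F[X] (RatFunc F) f / algebraMap F[X] (RatFunc F) D ^ m := by
  obtain ⟨Q, hQ⟩ := hP
  have hPQ : P * Q ≠ 0 := hQ ▸ pow_ne_zero m hD
  have hinj := IsFractionRing.injective F[X] (RatFunc F)
  have hP₀ := (map_ne_zero_iff _ hinj).mpr (left_ne_zero_of_mul hPQ)
  have hQ₀ := (map_ne_zero_iff _ hinj).mpr (right_ne_zero_of_mul hPQ)
  refine ⟨Q, ?_⟩
  rw [← map_pow, hQ, map_mul]
  field_simp

namespace ZMod

variable {n : ℕ}

theorem natCast_ne_zero_of_pos_of_lt {m : ℕ} (h₀ : 0 < m) (hm : m < n) : (m : ZMod n) ≠ 0 := by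
  rw [Ne, natCast_eq_zero_iff]
  exact fun h => absurd (Nat.le_of_dvd h₀ h) (by omega)

theorem natCast_factorial_ne_zero_of_lt {p m : ℕ} [Fact p.Prime] (hm : m < p) :
    (m ! : ZMod p) ≠ 0 := by
  rw [Ne, natCast_eq_zero_iff]
  exact fun h => absurd ((Nat.Prime.dvd_factorial Fact.out).mp h) (by omega)

variable [NeZero n]

theorem descPochhammer_eval_eq_zero_of_val_lt {z : ZMod n} {m : ℕ} (h : z.val < m) :
    (descPochhammer (ZMod n) m).eval z = 0 := by
  rw [← natCast_zmod_val z, descPochhammer_eval_eq_descFactorial,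
    Nat.descFactorial_eq_zero_iff_lt.mpr h, Nat.cast_zero]

theorem val_add_two_le_of_ne_neg_one {z : ZMod n} (hz : z ≠ -1) : z.val + 2 ≤ n := by
  refine (Nat.lt_of_le_of_ne (val_lt z) fun h => hz ?_ : z.val + 1 < n)
  have hz' : ((z.val + 1 : ℕ) : ZMod n) = 0 := by rw [h, natCast_self]
  rwa [Nat.cast_succ, natCast_zmod_val, add_eq_zero_iff_eq_neg] at hz'

theorem val_sub_one_add_val_neg_sub_one {w : ZMod n} (hw : w ≠ 0) :
    (w - 1).val + (-w - 1).val + 2 = n := by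
  have hu := val_add_two_le_of_ne_neg_one (by simpa [sub_eq_neg_self] using hw : w - 1 ≠ -1)
  have hv := val_add_two_le_of_ne_neg_one (by simpa using hw : -w - 1 ≠ -1)
  have hdvd : n ∣ (w - 1).val + (-w - 1).val + 2 := by
    rw [← natCast_eq_zero_iff]
    push_cast
    rw [natCast_zmod_val, natCast_zmod_val]
    ring
  have hle := Nat.le_of_dvd (by omega) hdvd
  have hsub := Nat.eq_zero_of_dvd_of_lt (Nat.dvd_sub hdvd dvd_rfl) (by omega)
  omega

end ZMod

section BinomialSeries

variable {p : ℕ}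

/-- For `m ≥ p` the factor `(m !)⁻¹` is the junk value `0`: only `m < p` is meaningful. -/
noncomputable def binomPoly (q : (ZMod p)[X]) (m : ℕ) : (ZMod p)[X] :=
  C (m ! : ZMod p)⁻¹ * (descPochhammer (ZMod p) m).comp q

theorem binomPoly_comp (q r : (ZMod p)[X]) (m : ℕ) :
    (binomPoly q m).comp r = binomPoly (q.comp r) m := by
  simp [binomPoly, mul_comp, comp_assoc]

theorem eval_binomPoly (a : ZMod p) (q : (ZMod p)[X]) (m : ℕ) :
    (binomPoly q m).eval a = (m ! : ZMod p)⁻¹ * (descPochhammer (ZMod p) m).eval (q.eval a) := by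
  simp [binomPoly, eval_comp]

noncomputable def binomSeries (q : (ZMod p)[X]) : PowerSeries (ZMod p)[X] :=
  PowerSeries.mk (binomPoly q)

theorem map_compRingHom_binomSeries (q r : (ZMod p)[X]) :
    PowerSeries.map (compRingHom r) (binomSeries q) = binomSeries (q.comp r) := by
  ext m
  simp [binomSeries, binomPoly_comp]

variable [Fact p.Prime]

theorem natDegree_binomPoly_le (q : (ZMod p)[X]) (m : ℕ) :
    (binomPoly q m).natDegree ≤ m * q.natDegree :=
  (natDegree_C_mul_le _ _).trans (natDegree_comp_le.trans (by simp))

theorem binomPoly_add_one_succ (q : (ZMod p)[X]) {m : ℕ} (hm : m + 1 < p) :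
    binomPoly (q + 1) (m + 1) = binomPoly q (m + 1) + binomPoly q m := by
  have hm' : ((m + 1 : ℕ) : ZMod p) ≠ 0 := ZMod.natCast_ne_zero_of_pos_of_lt (by omega) hm
  have hfact : ((m + 1)! : ZMod p)⁻¹ * (m + 1 : ℕ) = (m ! : ZMod p)⁻¹ := by
    rw [Nat.factorial_succ, Nat.cast_mul, mul_inv, mul_comm, ← mul_assoc,
      mul_inv_cancel₀ hm', one_mul]
  rw [binomPoly, binomPoly, binomPoly, descPochhammer_succ_comp_add_one, mul_add,
    ← mul_assoc, ← Nat.cast_succ, ← map_natCast C, ← C_mul, hfact]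

theorem eval_binomPoly_of_eval_eq_neg_one {q : (ZMod p)[X]} {a : ZMod p}
    (hq : q.eval a = -1) {m : ℕ} (hm : m < p) : (binomPoly q m).eval a = (-1) ^ m := by
  rw [eval_binomPoly, hq, descPochhammer_eval_neg_one, mul_left_comm,
    inv_mul_cancel₀ (ZMod.natCast_factorial_ne_zero_of_lt hm), mul_one]

theorem binomSeries_add_one_smodEq (q : (ZMod p)[X]) :
    binomSeries (q + 1) ≡ (1 + PowerSeries.X) * binomSeries q
      [SMOD Ideal.span {PowerSeries.X ^ p}] := by
  refine PowerSeries.smodEq_X_pow_of_coeff_eq fun m hm => ?_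
  rw [add_mul, one_mul, map_add]
  cases m with
  | zero => simp [binomSeries, binomPoly]
  | succ m =>
    rw [PowerSeries.coeff_succ_X_mul, binomSeries, binomSeries, PowerSeries.coeff_mk,
      PowerSeries.coeff_mk, PowerSeries.coeff_mk, binomPoly_add_one_succ q hm]

theorem binomSeries_add_natCast_smodEq (q : (ZMod p)[X]) (j : ℕ) :
    binomSeries (q + (j : (ZMod p)[X])) ≡ (1 + PowerSeries.X) ^ j * binomSeries q
      [SMOD Ideal.span {PowerSeries.X ^ p}] := by
  induction j with
  | zero => simp
  | succ j ih =>
    rw [Nat.cast_succ, ← add_assoc, pow_succ', mul_assoc]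
    exact (binomSeries_add_one_smodEq _).trans (SModEq.mul SModEq.rfl ih)

end BinomialSeries

section GeneratingFunction

variable (p : ℕ)

/-- The series `(1 + t)^{α-1} (1 - t/s)^{sα-1}`, meaningful below `t^p`; its `t^{p-1}`-coefficient
is `b_{1,s}(α)` (see `map_bPoly`). -/
noncomputable def bSeries (s : ℕ) : PowerSeries (ZMod p)[X] :=
  PowerSeries.rescale (C (-(s : ZMod p)⁻¹)) (binomSeries ((s : (ZMod p)[X]) * X - 1)) *
    binomSeries (X - 1)

noncomputable def bPoly (s n : ℕ) : (ZMod p)[X] :=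
  PowerSeries.coeff n (bSeries p s)

noncomputable def bShift (s : ℕ) : PowerSeries (ZMod p) :=
  (1 + PowerSeries.X) * PowerSeries.rescale (-(s : ZMod p)⁻¹) ((1 + PowerSeries.X) ^ s)

variable {p}

theorem bPoly_eq_sum (s n : ℕ) :
    bPoly p s n = ∑ k ∈ range (n + 1), C ((-(s : ZMod p)⁻¹) ^ k) *
      binomPoly (X - 1) (n - k) * binomPoly ((s : (ZMod p)[X]) * X - 1) k := by
  rw [bPoly, bSeries, PowerSeries.coeff_mul, Nat.sum_antidiagonal_eq_sum_range_succ_mk]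
  refine sum_congr rfl fun k _ => ?_
  simp only [PowerSeries.coeff_rescale, binomSeries, PowerSeries.coeff_mk, map_pow]
  ring

theorem coeff_zero_bShift (s : ℕ) : PowerSeries.coeff 0 (bShift p s) = 1 := by
  simp [bShift]

variable [Fact p.Prime]

theorem natDegree_bPoly_le (s n : ℕ) : (bPoly p s n).natDegree ≤ n := by
  rw [bPoly_eq_sum]
  refine natDegree_sum_le_of_forall_le _ _ fun k hk => ?_
  have h₁ : (binomPoly (X - 1 : (ZMod p)[X]) (n - k)).natDegree ≤ n - k :=
    (natDegree_binomPoly_le _ _).trans (mul_le_of_le_one_right' (by compute_degree!))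
  have h₂ : (binomPoly ((s : (ZMod p)[X]) * X - 1) k).natDegree ≤ k :=
    (natDegree_binomPoly_le _ _).trans (mul_le_of_le_one_right' (by compute_degree!))
  have h₃ := (natDegree_C_mul_le ((-(s : ZMod p)⁻¹) ^ k) (binomPoly (X - 1) (n - k))).trans h₁
  have := mem_range.mp hk
  refine natDegree_mul_le.trans ?_
  omega

theorem coeff_one_bShift {s : ℕ} (hs : (s : ZMod p) ≠ 0) :
    PowerSeries.coeff 1 (bShift p s) = 0 := by
  simp [bShift, add_mul, PowerSeries.coeff_one_pow, hs]

theorem map_compRingHom_bSeries_smodEq (s : ℕ) :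
    PowerSeries.map (compRingHom (X + 1)) (bSeries p s) ≡
      PowerSeries.map C (bShift p s) * bSeries p s [SMOD Ideal.span {PowerSeries.X ^ p}] := by
  have hshift : ((s : (ZMod p)[X]) * X - 1).comp (X + 1) =
      ((s : (ZMod p)[X]) * X - 1) + (s : (ZMod p)[X]) := by
    simp only [sub_comp, mul_comp, natCast_comp, X_comp, one_comp]
    ring
  have hscaled := PowerSeries.rescale_smodEq_X_pow (C (-(s : ZMod p)⁻¹))
    (binomSeries_add_natCast_smodEq ((s : (ZMod p)[X]) * X - 1) s)
  have hX := binomSeries_add_one_smodEq (X - 1 : (ZMod p)[X])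
  rw [sub_add_cancel] at hX
  have hmapC : PowerSeries.map C (bShift p s) =
      (1 + PowerSeries.X) *
        PowerSeries.rescale (C (-(s : ZMod p)⁻¹)) ((1 + PowerSeries.X) ^ s) := by
    simp [bShift]
  rw [bSeries, map_mul, ← PowerSeries.rescale_map, map_compRingHom_binomSeries,
    map_compRingHom_binomSeries, hshift, coe_compRingHom_apply, C_comp, sub_comp, X_comp,
    one_comp, add_sub_cancel_right, hmapC]
  refine (hscaled.mul hX).trans ?_
  rw [map_mul, show ∀ a b c d : PowerSeries (ZMod p)[X], a * b * (c * d) = c * a * (b * d) from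
    fun _ _ _ _ => by ring]
  exact SModEq.rfl

theorem bPoly_comp_X_add_one (s : ℕ) {n : ℕ} (hn : n < p) :
    (bPoly p s n).comp (X + 1) =
      ∑ m ∈ range (n + 1), C (PowerSeries.coeff m (bShift p s)) * bPoly p s (n - m) := by
  have h := PowerSeries.coeff_eq_of_smodEq_X_pow (map_compRingHom_bSeries_smodEq s) hn
  rwa [PowerSeries.coeff_map, coe_compRingHom_apply, PowerSeries.coeff_mul,
    Nat.sum_antidiagonal_eq_sum_range_succ_mk] at h

end GeneratingFunction

section Degree

variable {p : ℕ} [Fact p.Prime]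

theorem natDegree_le_half_of_comp_X_add_one {b : ℕ → (ZMod p)[X]} {u : ℕ → ZMod p}
    (hu₀ : u 0 = 1) (hu₁ : u 1 = 0) (hdeg : ∀ n, (b n).natDegree ≤ n)
    (hrec : ∀ n < p, (b n).comp (X + 1) = ∑ m ∈ range (n + 1), C (u m) * b (n - m)) :
    ∀ n < p, (b n).natDegree ≤ n / 2 := by
  intro n
  induction n using Nat.strong_induction_on with
  | _ n ih =>
  intro hn
  by_contra! hlt
  set e := (b n).natDegree
  have he₀ : 0 < e := by omega
  have hcoeff := coeff_comp_X_add_one (b n) (e - 1) (by omega)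
  rw [Nat.sub_add_cancel he₀, hrec n hn, finsetSum_coeff, sum_eq_single 0] at hcoeff
  · have hlead : (e : ZMod p) * (b n).coeff e = 0 := by
      simpa only [hu₀, map_one, one_mul, Nat.sub_zero, left_eq_add] using hcoeff
    refine mul_ne_zero (ZMod.natCast_ne_zero_of_pos_of_lt he₀ (by linarith [hdeg n])) ?_ hlead
    exact leadingCoeff_ne_zero.mpr (ne_zero_of_natDegree_gt he₀)
  · intro m hm hm₀
    rw [coeff_C_mul]
    have := mem_range.mp hm
    rcases (by omega : m = 1 ∨ 2 ≤ m) with rfl | hm₂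
    · rw [hu₁, zero_mul]
    · have := ih (n - m) (by omega) (by omega)
      rw [coeff_eq_zero_of_natDegree_lt (by omega), mul_zero]
  · simp

theorem natDegree_bPoly_le_half {s : ℕ} (hs : (s : ZMod p) ≠ 0) :
    (bPoly p s (p - 1)).natDegree ≤ (p - 1) / 2 :=
  natDegree_le_half_of_comp_X_add_one (coeff_zero_bShift s) (coeff_one_bShift hs)
    (natDegree_bPoly_le s) (fun _ => bPoly_comp_X_add_one s) _
    (Nat.sub_one_lt (Fact.out : p.Prime).ne_zero)

end Degree

section Evaluation

variable {p : ℕ} [Fact p.Prime]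

theorem eval_zero_bPoly {s : ℕ} (hs : (s : ZMod p) + 1 ≠ 0) :
    (bPoly p s (p - 1)).eval 0 = 1 := by
  have hp := (Fact.out : p.Prime).one_lt
  have hx : -(s : ZMod p)⁻¹ ≠ 1 := by
    rw [Ne, neg_eq_iff_eq_neg, inv_eq_iff_eq_inv, inv_neg, inv_one]
    exact fun h => hs (by rw [h]; ring)
  have hterm : ∀ k ∈ range p, (C ((-(s : ZMod p)⁻¹) ^ k) * binomPoly (X - 1) (p - 1 - k) *
      binomPoly ((s : (ZMod p)[X]) * X - 1) k).eval 0 = (-(s : ZMod p)⁻¹) ^ k := by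
    intro k hk
    have hk := mem_range.mp hk
    rw [eval_mul, eval_mul, eval_C, eval_binomPoly_of_eval_eq_neg_one (by simp) (by omega),
      eval_binomPoly_of_eval_eq_neg_one (by simp) hk, mul_assoc, ← pow_add,
      Nat.sub_add_cancel (by omega), ZMod.pow_card_sub_one_eq_one (neg_ne_zero.mpr one_ne_zero),
      mul_one]
  rw [bPoly_eq_sum, Nat.sub_add_cancel hp.le, eval_finsetSum, sum_congr rfl hterm,
    geom_sum_eq hx, ZMod.pow_card, div_self (sub_ne_zero.mpr hx)]

theorem eval_bPoly_eq_zero {s : ℕ} {a : ZMod p} (h : (a - 1).val + (s * a - 1).val < p - 1) :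
    (bPoly p s (p - 1)).eval a = 0 := by
  rw [bPoly_eq_sum, eval_finsetSum]
  refine sum_eq_zero fun k hk => ?_
  simp only [eval_mul, eval_binomPoly, eval_sub, eval_X, eval_one, eval_natCast]
  by_cases hk : (s * a - 1 : ZMod p).val < k
  · rw [ZMod.descPochhammer_eval_eq_zero_of_val_lt hk]
    ring
  · rw [ZMod.descPochhammer_eval_eq_zero_of_val_lt (by omega : (a - 1).val < p - 1 - k)]
    ring

theorem eval_bPoly_mul_eval_neg {s : ℕ} (hs : (s : ZMod p) ≠ 0) {a : ZMod p} (ha : a ≠ 0) :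
    (bPoly p s (p - 1)).eval a * (bPoly p s (p - 1)).eval (-a) = 0 := by
  have h₁ := ZMod.val_sub_one_add_val_neg_sub_one ha
  have h₂ := ZMod.val_sub_one_add_val_neg_sub_one (mul_ne_zero hs ha)
  rw [← mul_neg] at h₂
  rcases lt_or_ge ((a - 1).val + (s * a - 1).val) (p - 1) with h | h
  · rw [eval_bPoly_eq_zero h, zero_mul]
  · rw [eval_bPoly_eq_zero (a := -a) (by omega), mul_zero]

theorem bPoly_mul_comp_neg_X {s : ℕ} (hs : (s : ZMod p) ≠ 0) (hs' : (s : ZMod p) + 1 ≠ 0) :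
    bPoly p s (p - 1) * (bPoly p s (p - 1)).comp (-X) = 1 - X ^ (p - 1) := by
  have hp := (Fact.out : p.Prime).one_lt
  have hdeg := natDegree_bPoly_le_half hs
  refine eq_of_natDegree_lt_card_of_eval_eq _ _ (f := id) Function.injective_id (fun a => ?_) ?_
  · rcases eq_or_ne a 0 with rfl | ha
    · simp [eval_zero_bPoly hs', zero_pow (by omega : p - 1 ≠ 0)]
    · simp [eval_bPoly_mul_eval_neg hs ha, ZMod.pow_card_sub_one_eq_one ha]
  · have hprod : (bPoly p s (p - 1) * (bPoly p s (p - 1)).comp (-X)).natDegree ≤ p - 1 := by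
      refine natDegree_mul_le.trans ?_
      rw [natDegree_comp, natDegree_neg, natDegree_X, mul_one]
      omega
    have hrhs : (1 - X ^ (p - 1) : (ZMod p)[X]).natDegree ≤ p - 1 := by compute_degree
    rw [ZMod.card]
    omega

theorem bPoly_dvd_X_pow_sub_one {s : ℕ} (hs : (s : ZMod p) ≠ 0) (hs' : (s : ZMod p) + 1 ≠ 0) :
    bPoly p s (p - 1) ∣ X ^ (p - 1) - 1 :=
  ⟨-(bPoly p s (p - 1)).comp (-X), by rw [mul_neg, bPoly_mul_comp_neg_X hs hs', neg_sub]⟩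

theorem prod_bPoly_dvd_X_pow_sub_one_pow {j : ℕ} (hj : j + 1 < p) :
    ∏ s ∈ Icc 1 j, bPoly p s (p - 1) ∣ (X ^ (p - 1) - 1) ^ j := by
  refine (prod_dvd_prod_of_dvd _ (fun _ => X ^ (p - 1) - 1) fun s hs => ?_).trans ?_
  · obtain ⟨hs₁, hsj⟩ := mem_Icc.mp hs
    exact bPoly_dvd_X_pow_sub_one (ZMod.natCast_ne_zero_of_pos_of_lt hs₁ (by omega))
      (by exact_mod_cast ZMod.natCast_ne_zero_of_pos_of_lt (by omega) (by omega : s + 1 < p))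
  · rw [prod_const, Nat.card_Icc, Nat.add_sub_cancel]

end Evaluation

section Specialization

variable {K : Type*} [Field K]

theorem map_binomPoly {p : ℕ} [Fact p.Prime] (ψ : (ZMod p)[X] →+* K) (q : (ZMod p)[X]) (m : ℕ) :
    ψ (binomPoly q m) = binomF (ψ q) m := by
  rw [binomPoly, binomF, map_mul, comp, hom_eval₂, eval₂_eq_eval_map, descPochhammer_map,
    ← RingHom.comp_apply, map_inv₀, map_natCast, div_eq_inv_mul]

theorem map_bPoly {p : ℕ} [Fact p.Prime] (ψ : (ZMod p)[X] →+* K) (s : ℕ) :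
    ψ (bPoly p s (p - 1)) = bF p 1 s (ψ X) := by
  rw [bPoly_eq_sum, map_sum, bF, Nat.sub_add_cancel (Fact.out : p.Prime).one_le]
  refine sum_congr rfl fun k _ => ?_
  simp only [map_mul, map_binomPoly, map_sub, map_one, map_natCast, ← RingHom.comp_apply ψ C,
    map_pow, map_neg, map_inv₀, Nat.cast_one, one_mul, neg_div, one_div]

theorem coeff_Gpoly (p : ℕ) (a : K) (k : ℕ) :
    (Gpoly p a).coeff k =
      if k ∈ Icc 1 (p - 1) then -((k : K)⁻¹ / ∏ s ∈ Icc 1 (k - 1), bF p 1 s a) else 0 := by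
  simp only [Gpoly, coeff_neg, finsetSum_coeff, coeff_C_mul_X_pow, sum_ite_eq]
  rw [apply_ite Neg.neg, neg_zero]

end Specialization

theorem stmt4_general (p : ℕ) [Fact p.Prime] :
    ∀ k : ℕ, ∃ (f : Polynomial (ZMod p)) (m : ℕ),
      (Gpoly p (RatFunc.X : RatFunc (ZMod p))).coeff k =
        algebraMap (Polynomial (ZMod p)) (RatFunc (ZMod p)) f /
          ((RatFunc.X : RatFunc (ZMod p)) ^ (p - 1) - 1) ^ m := by
  intro k
  rw [coeff_Gpoly]
  split_ifs with hk
  · obtain ⟨hk₁, hkp⟩ := mem_Icc.mp hk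
    set ψ := algebraMap (ZMod p)[X] (RatFunc (ZMod p))
    have hprod : ∏ s ∈ Icc 1 (k - 1), bF p 1 s RatFunc.X =
        ψ (∏ s ∈ Icc 1 (k - 1), bPoly p s (p - 1)) := by
      rw [map_prod, ← RatFunc.algebraMap_X]
      exact prod_congr rfl fun s _ => (map_bPoly ψ s).symm
    obtain ⟨f, hf⟩ := RatFunc.exists_inv_algebraMap_eq_div_pow
      (X_pow_sub_C_ne_zero (Nat.sub_pos_of_lt (Fact.out : p.Prime).one_lt) 1)
      (prod_bPoly_dvd_X_pow_sub_one_pow (by omega : k - 1 + 1 < p))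
    refine ⟨C (-(k : ZMod p)⁻¹) * f, k - 1, ?_⟩
    rw [hprod, div_eq_mul_inv, hf]
    simp only [ψ, map_mul, map_sub, map_pow, map_one, RatFunc.algebraMap_X,
      RatFunc.algebraMap_C, map_neg, map_inv₀, map_natCast]
    ring
  · exact ⟨0, 0, by simp⟩

theorem stmt4 (p : ℕ) [Fact p.Prime] (hodd : Odd p) :
    ∀ k : ℕ, ∃ (f : Polynomial (ZMod p)) (m : ℕ),
      (Gpoly p (RatFunc.X : RatFunc (ZMod p))).coeff k =
        algebraMap (Polynomial (ZMod p)) (RatFunc (ZMod p)) f /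
          ((RatFunc.X : RatFunc (ZMod p)) ^ (p - 1) - 1) ^ m :=
  stmt4_general p
end

section
/- Let p be an odd prime and let r, s be integers with 0 < r, s < p and r + s ≠ p. Then in the polynomial ring F_p(α)[X] one has L_{p−1}^{(rα)}(rX) · L_{p−1}^{(sα)}(sX) ≡ b_{r,s}(α) · L_{p−1}^{((r+s)α)}((r+s)X) modulo the ideal generated by X^p − (α^p − α), where L_{p−1}^{(rα)}(rX) denotes the polynomial obtained from L_{p−1}^{(α)}(X) by substituting rα for the parameter and rX for the variable. -/
noncomputable def Lag (p : ℕ) {K : Type*} [Field K] (a : K) : Polynomial K :=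
  ∑ k ∈ Finset.range p,
    Polynomial.C (binomF (a - 1) (p - 1 - k) * (-1 : K) ^ k / (k.factorial : K)) *
      Polynomial.X ^ k

/-!
Write `μ = α ^ p - α`. The substitution `α ↦ α ^ p`, `Y ↦ μ` (`frobEval`) sends `F_p[α][Y]` to
`F_p[α]`, kills `Y ^ p - μ`, and is injective in `Y`-degree `< p`: since `μ' = -1`,
differentiating shows that `1, μ, …, μ ^ (p - 1)` are independent over the kernel of `d/dα`.
So the congruence becomes an identity between the images `H_t` of `-L_{p-1}^{(tα)}(tY)`.
Each `H_t` solves `μ H' = t α H`; hence `H_r H_s` and `H_{r+s}` solve the same equation, their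
Wronskian vanishes, and `H_r H_s / H_{r+s}` lies in `F_p(α ^ p)`. Comparing the coefficients of
`μ ^ (p - 1)` identifies this ratio with the image of `b_{r,s}`.
-/

open Polynomial Finset

namespace LaguerreCharP

section CharP

variable {R : Type*} [CommRing R] (p : ℕ) [CharP R p]

theorem derivative_expand_eq_zero (f : R[X]) : derivative (expand R p f) = 0 := by
  simp [derivative_expand]

theorem derivative_pow_char_eq_zero (f : R[X]) : derivative (f ^ p) = 0 := by
  simp [derivative_pow]

theorem derivative_mul_pow_pred_eq_zero [Fact p.Prime] {f g : R[X]}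
    (h : derivative f * g = f * derivative g) : derivative (f * g ^ (p - 1)) = 0 := by
  obtain ⟨q, rfl⟩ : ∃ q, p = q + 2 := ⟨p - 2, by have := (Fact.out : p.Prime).two_le; omega⟩
  have hq : ((q + 1 : ℕ) : R) = -1 := by
    have := CharP.cast_eq_zero R (q + 2)
    push_cast at this ⊢
    linear_combination this
  rw [derivative_mul, derivative_pow, show q + 2 - 1 = q + 1 by omega, Nat.add_sub_cancel, hq,
    C_neg, C_1]
  linear_combination g ^ q * h

theorem eq_zero_of_sum_mul_pow_eq_zero [IsDomain R] {μ : R[X]} {c : R}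
    (hμ : derivative μ = C c) (hc : c ≠ 0) {n : ℕ} (hn : n ≤ p) {w : ℕ → R[X]}
    (hw : ∀ j, derivative (w j) = 0) (h : ∑ j ∈ range n, w j * μ ^ j = 0) {j : ℕ} (hj : j < n) :
    w j = 0 := by
  induction n generalizing w j with
  | zero => omega
  | succ n ih =>
    have hterm : ∀ j, derivative (w j * μ ^ j) = C c * (j : R[X]) * w j * μ ^ (j - 1) := by
      intro j
      rw [derivative_mul, hw, derivative_pow, hμ, C_eq_natCast]
      ring
    have hderiv : ∑ i ∈ range n, (C c * (i + 1 : R[X]) * w (i + 1)) * μ ^ i = 0 := by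
      have := congrArg derivative h
      rw [derivative_sum, derivative_zero] at this
      simp only [hterm] at this
      rw [sum_range_succ'] at this
      simpa using this
    have hsucc : ∀ i < n, w (i + 1) = 0 := by
      intro i hi
      have hi' : ((i + 1 : ℕ) : R) ≠ 0 := by
        rw [Ne, CharP.cast_eq_zero_iff R p]
        exact Nat.not_dvd_of_pos_of_lt i.succ_pos (by omega)
      have hne : (C c * (i + 1 : R[X])) ≠ 0 := by
        rw [← Nat.cast_succ, ← C_eq_natCast, ← C_mul, Ne, C_eq_zero]
        exact mul_ne_zero hc hi'
      exact (mul_eq_zero.1 (ih (by omega) (fun j => by simp [hw]) hderiv hi)).resolve_left hne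
    cases j with
    | zero =>
      rw [sum_range_succ', sum_eq_zero fun i hi => by rw [hsucc i (mem_range.1 hi), zero_mul],
        zero_add, pow_zero, mul_one] at h
      exact h
    | succ j => exact hsucc j (by omega)

end CharP

theorem factorial_mul_factorial_eq_neg_one_pow {K : Type*} [Field K] (p : ℕ) [Fact p.Prime]
    [CharP K p] {k : ℕ} (hk : k < p) :
    ((p - 1 - k).factorial : K) * k.factorial = (-1) ^ (k + 1) := by
  induction k with
  | zero =>
    have h := congrArg (ZMod.castHom (dvd_refl p) K) (ZMod.wilsons_lemma (p := p))
    rw [map_natCast, map_neg, map_one] at h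
    simpa using h
  | succ k ih =>
    have hcast : ((p - 1 - k : ℕ) : K) = -(k + 1) := by
      have h0 : ((p - 1 - k + (k + 1) : ℕ) : K) = 0 := by
        rw [show p - 1 - k + (k + 1) = p by omega]
        exact CharP.cast_eq_zero K p
      push_cast at h0
      linear_combination h0
    have hfac := Nat.factorial_succ (p - 1 - (k + 1))
    rw [show p - 1 - (k + 1) + 1 = p - 1 - k by omega] at hfac
    rw [hfac, Nat.cast_mul, hcast] at ih
    rw [Nat.factorial_succ, Nat.cast_mul]
    push_cast
    linear_combination -ih (by omega)

theorem neg_one_pow_div_factorial_mul_factorial {K : Type*} [Field K] (p : ℕ) [Fact p.Prime]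
    [CharP K p] {k : ℕ} (hk : k < p) :
    (-1 : K) ^ k / ((p - 1 - k).factorial * k.factorial) = -1 := by
  rw [factorial_mul_factorial_eq_neg_one_pow p hk, pow_succ, div_mul_cancel_left₀ (by simp),
    inv_neg, inv_one]

theorem eval₂_eq_sum_range_add_pow {R S : Type*} [CommSemiring R] [CommSemiring S] (f : R →+* S)
    {T : R[X]} {n : ℕ} (hT : T.natDegree < 2 * n) (x : S) :
    T.eval₂ f x = ∑ j ∈ range n, (f (T.coeff j) + x ^ n * f (T.coeff (n + j))) * x ^ j := by
  rw [eval₂_eq_sum_range' f hT, two_mul, sum_range_add, ← sum_add_distrib]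
  refine sum_congr rfl fun j _ => ?_
  ring

theorem prod_range_natCast_eq_prod_univ {M : Type*} [CommMonoid M] (p : ℕ) [NeZero p]
    (f : ZMod p → M) : ∏ j ∈ range p, f j = ∏ a, f a :=
  prod_nbij' (↑) ZMod.val (by simp) (by simp [ZMod.val_lt])
    (fun j hj => ZMod.val_cast_of_lt (mem_range.1 hj)) (fun a _ => ZMod.natCast_zmod_val a)
    (fun _ _ => rfl)

theorem prod_range_sub_natCast_eq_pow_sub (p : ℕ) [Fact p.Prime] {A : Type*} [CommRing A]
    [Algebra (ZMod p) A] (Y : A) : ∏ j ∈ range p, (Y - j) = Y ^ p - Y := by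
  have hpoly : ∏ a : ZMod p, (X - C a) = (X ^ p - X : (ZMod p)[X]) := by
    have hmonic : (X ^ p - X : (ZMod p)[X]).Monic :=
      monic_X_pow_sub (by simpa using (Fact.out : p.Prime).one_lt)
    have hroots := FiniteField.roots_X_pow_card_sub_X (ZMod p)
    have hdeg := FiniteField.X_pow_card_sub_X_natDegree_eq (ZMod p) (Fact.out : p.Prime).one_lt
    rw [ZMod.card] at hroots
    have := prod_multiset_X_sub_C_of_monic_of_roots_card_eq hmonic
      (by rw [hroots, hdeg]; simp)
    rwa [hroots] at this
  have := congrArg (aeval Y) hpoly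
  rw [← prod_range_natCast_eq_prod_univ] at this
  simpa [map_prod] using this

section FrobeniusEvaluation

variable (p : ℕ) [Fact p.Prime]

noncomputable def mu : (ZMod p)[X] := X ^ p - X

noncomputable def frobEval : (ZMod p)[X][X] →+* (ZMod p)[X] :=
  eval₂RingHom (expand (ZMod p) p).toRingHom (mu p)

theorem derivative_mu : derivative (mu p) = C (-1) := by
  simp [mu, derivative_X_pow]

theorem mu_ne_zero : mu p ≠ 0 :=
  FiniteField.X_pow_card_sub_X_ne_zero (ZMod p) (Fact.out : p.Prime).one_lt

theorem expand_mu : expand (ZMod p) p (mu p) = mu p ^ p := ZMod.expand_card _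

@[simp]
theorem frobEval_C (a : (ZMod p)[X]) : frobEval p (C a) = expand (ZMod p) p a := eval₂_C _ _

@[simp]
theorem frobEval_X : frobEval p X = mu p := eval₂_X _ _

theorem frobEval_eq_sum {T : (ZMod p)[X][X]} (hT : T.natDegree < p) :
    frobEval p T = ∑ j ∈ range p, expand (ZMod p) p (T.coeff j) * mu p ^ j :=
  eval₂_eq_sum_range' _ hT _

theorem eq_zero_of_frobEval_eq_zero {T : (ZMod p)[X][X]} (hT : T.natDegree < p)
    (h : frobEval p T = 0) : T = 0 := by
  rw [frobEval_eq_sum p hT] at h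
  refine Polynomial.ext fun j => ?_
  rcases lt_or_ge j p with hj | hj
  · refine expand_injective (Fact.out : p.Prime).pos ?_
    rw [coeff_zero, map_zero]
    exact eq_zero_of_sum_mul_pow_eq_zero p (derivative_mu p) (neg_ne_zero.2 one_ne_zero) le_rfl
      (fun j => derivative_expand_eq_zero p _) h hj
  · exact coeff_eq_zero_of_natDegree_lt (hT.trans_le hj)

theorem dvd_of_frobEval_eq_zero {T : (ZMod p)[X][X]} (h : frobEval p T = 0) :
    X ^ p - C (mu p) ∣ T := by
  have hmonic : (X ^ p - C (mu p)).Monic := monic_X_pow_sub_C _ (Fact.out : p.Prime).ne_zero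
  have hdeg : (X ^ p - C (mu p)).natDegree = p := natDegree_X_pow_sub_C
  have hne : X ^ p - C (mu p) ≠ 1 := fun h1 => by
    rw [h1, natDegree_one] at hdeg
    exact (Fact.out : p.Prime).ne_zero hdeg.symm
  have hker : frobEval p (X ^ p - C (mu p)) = 0 := by
    rw [map_sub, map_pow, frobEval_X, frobEval_C, expand_mu, sub_self]
  rw [← modByMonic_eq_zero_iff_dvd hmonic]
  have hlt := natDegree_modByMonic_lt T hmonic hne
  rw [hdeg] at hlt
  refine eq_zero_of_frobEval_eq_zero p hlt ?_
  rw [modByMonic_eq_sub_mul_div, map_sub, map_mul, h, hker, zero_mul, sub_zero]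

theorem frobEval_eq_expand_coeff_mul {A B : (ZMod p)[X][X]}
    (hA : A.natDegree < 2 * p - 1) (hB : B.natDegree < p) (hB1 : B.coeff (p - 1) = 1)
    (hAB : derivative (frobEval p A * frobEval p B ^ (p - 1)) = 0) :
    frobEval p A = expand (ZMod p) p (A.coeff (p - 1)) * frobEval p B := by
  have hp := (Fact.out : p.Prime).pos
  set Q := frobEval p A
  set R := frobEval p B
  have hR : R ≠ 0 := fun h0 => by
    simp [eq_zero_of_frobEval_eq_zero p hB h0] at hB1
  have hpow : R ^ (p - 1) * R = R ^ p := by rw [← pow_succ, Nat.sub_add_cancel hp]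
  have hQ : Q = ∑ j ∈ range p, (expand (ZMod p) p (A.coeff j)
      + mu p ^ p * expand (ZMod p) p (A.coeff (p + j))) * mu p ^ j :=
    eval₂_eq_sum_range_add_pow _ (by omega) _
  -- `R ^ p * Q = (Q * R ^ (p - 1)) * R`, compared in the basis `mu ^ j` over `ker derivative`
  have hsum : ∑ j ∈ range p, (R ^ p * (expand (ZMod p) p (A.coeff j)
      + mu p ^ p * expand (ZMod p) p (A.coeff (p + j)))
      - Q * R ^ (p - 1) * expand (ZMod p) p (B.coeff j)) * mu p ^ j = 0 := by
    simp only [sub_mul, sum_sub_distrib, mul_assoc, ← mul_sum]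
    rw [← frobEval_eq_sum p hB, ← mul_assoc, ← hQ]
    linear_combination (-Q) * hpow
  have htop := eq_zero_of_sum_mul_pow_eq_zero p (derivative_mu p) (neg_ne_zero.2 one_ne_zero)
    le_rfl (fun j => by
      simp [derivative_mul, derivative_expand_eq_zero, derivative_pow_char_eq_zero, hAB])
    hsum (j := p - 1) (by omega)
  rw [coeff_eq_zero_of_natDegree_lt (show A.natDegree < p + (p - 1) by omega), hB1, map_zero,
    map_one] at htop
  apply mul_left_cancel₀ (pow_ne_zero (p - 1) hR)
  linear_combination -htop - expand (ZMod p) p (A.coeff (p - 1)) * hpow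

end FrobeniusEvaluation

section Laguerre

variable {p : ℕ} [Fact p.Prime]

noncomputable def fallingFact (t : ZMod p) (m : ℕ) : (ZMod p)[X] :=
  ∏ j ∈ range m, (C t * X - 1 - (j : (ZMod p)[X]))

theorem expand_fallingFact_succ (t : ZMod p) (m : ℕ) :
    expand (ZMod p) p (fallingFact t (m + 1)) =
      expand (ZMod p) p (fallingFact t m) * (C t * X ^ p - 1 - (m : (ZMod p)[X])) := by
  simp [fallingFact, prod_range_succ]

theorem expand_fallingFact_self (t : ZMod p) :
    expand (ZMod p) p (fallingFact t p) = (C t * mu p) ^ p := by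
  have hff : fallingFact t p = (C t * X) ^ p - C t * X := by
    rw [fallingFact, prod_range_sub_natCast_eq_pow_sub, sub_pow_char, one_pow]
    ring
  have ht : (C t) ^ p = C t := by rw [← C_pow, ZMod.pow_card]
  rw [hff]
  simp only [map_sub, map_pow, map_mul, expand_C, expand_X]
  rw [mu, mul_pow, mul_pow, sub_pow_char, ht]
  ring

/-- `-L_{p-1}^{(tα)}(tY)`: in `F_p`, `1 / ((p - 1 - k)! k!) = -(-1) ^ k` clears the denominators. -/
noncomputable def negLaguerre (t : ZMod p) : (ZMod p)[X][X] :=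
  ∑ k ∈ range p, C (fallingFact t (p - 1 - k) * C t ^ k) * X ^ k

theorem coeff_negLaguerre (t : ZMod p) {k : ℕ} (hk : k < p) :
    (negLaguerre t).coeff k = fallingFact t (p - 1 - k) * C t ^ k := by
  simp only [negLaguerre, finsetSum_coeff, coeff_C_mul_X_pow, sum_ite_eq, mem_range, hk, if_true]

theorem natDegree_negLaguerre_lt (t : ZMod p) : (negLaguerre t).natDegree < p := by
  have hp := (Fact.out : p.Prime).pos
  refine lt_of_le_of_lt (natDegree_sum_le_of_forall_le _ _ fun k hk => ?_) (Nat.sub_lt hp one_pos)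
  exact (natDegree_C_mul_X_pow_le _ _).trans (by have := mem_range.1 hk; omega)

theorem coeff_negLaguerre_pred {t : ZMod p} (ht : t ≠ 0) : (negLaguerre t).coeff (p - 1) = 1 := by
  rw [coeff_negLaguerre t (Nat.sub_lt (Fact.out : p.Prime).pos one_pos), Nat.sub_self,
    fallingFact, prod_range_zero, one_mul, ← C_pow, ZMod.pow_card_sub_one_eq_one ht, C_1]

theorem frobEval_negLaguerre (t : ZMod p) : frobEval p (negLaguerre t) =
    ∑ k ∈ range p, expand (ZMod p) p (fallingFact t (p - 1 - k)) * (C t * mu p) ^ k := by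
  simp [negLaguerre, mul_pow, mul_assoc]

theorem mu_mul_derivative_C_mul_mu_pow (t : ZMod p) (k : ℕ) :
    mu p * derivative ((C t * mu p) ^ k) = -(k * (C t * mu p) ^ k) := by
  cases k with
  | zero => simp
  | succ k =>
    rw [derivative_pow, derivative_mul, derivative_C, derivative_mu, C_eq_natCast,
      Nat.add_sub_cancel, C_neg, C_1]
    push_cast
    ring

theorem mu_mul_derivative_frobEval_negLaguerre (t : ZMod p) :
    mu p * derivative (frobEval p (negLaguerre t)) = C t * X * frobEval p (negLaguerre t) := by
  have hu : C t * mu p = C t * X ^ p - C t * X := by rw [mu]; ring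
  -- termwise, `C t * X - mu * derivative` turns the sum into a telescoping one
  have hterm : ∀ k ∈ range p,
      C t * X * (expand (ZMod p) p (fallingFact t (p - 1 - k)) * (C t * mu p) ^ k)
        - mu p * derivative (expand (ZMod p) p (fallingFact t (p - 1 - k)) * (C t * mu p) ^ k)
      = expand (ZMod p) p (fallingFact t (p - k)) * (C t * mu p) ^ k
        - expand (ZMod p) p (fallingFact t (p - (k + 1))) * (C t * mu p) ^ (k + 1) := by
    intro k hk
    have hk := mem_range.1 hk
    have hcast : ((p - 1 - k : ℕ) : (ZMod p)[X]) = -1 - k := by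
      have h0 : ((p - 1 - k + 1 + k : ℕ) : (ZMod p)[X]) = 0 := by
        rw [show p - 1 - k + 1 + k = p by omega]
        exact CharP.cast_eq_zero _ p
      push_cast at h0
      linear_combination h0
    rw [show p - k = p - 1 - k + 1 by omega, show p - (k + 1) = p - 1 - k by omega,
      expand_fallingFact_succ, hcast, derivative_mul, derivative_expand_eq_zero, zero_mul,
      zero_add]
    linear_combination
      (-expand (ZMod p) p (fallingFact t (p - 1 - k))) * mu_mul_derivative_C_mul_mu_pow t k
      + expand (ZMod p) p (fallingFact t (p - 1 - k)) * (C t * mu p) ^ k * hu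
  suffices h : C t * X * frobEval p (negLaguerre t) - mu p * derivative (frobEval p (negLaguerre t))
      = 0 by linear_combination -h
  rw [frobEval_negLaguerre, derivative_sum, mul_sum, mul_sum, ← sum_sub_distrib,
    sum_congr rfl hterm,
    sum_range_sub' (fun k => expand (ZMod p) p (fallingFact t (p - k)) * (C t * mu p) ^ k),
    Nat.sub_zero, Nat.sub_self, expand_fallingFact_self, fallingFact, prod_range_zero, map_one]
  ring

theorem derivative_frobEval_negLaguerre_mul (t₁ t₂ : ZMod p) :
    derivative (frobEval p (negLaguerre t₁ * negLaguerre t₂)) * frobEval p (negLaguerre (t₁ + t₂))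
      = frobEval p (negLaguerre t₁ * negLaguerre t₂)
        * derivative (frobEval p (negLaguerre (t₁ + t₂))) := by
  refine mul_left_cancel₀ (mu_ne_zero p) ?_
  have h₁ := mu_mul_derivative_frobEval_negLaguerre t₁
  have h₂ := mu_mul_derivative_frobEval_negLaguerre t₂
  have h₁₂ := mu_mul_derivative_frobEval_negLaguerre (t₁ + t₂)
  rw [map_mul, derivative_mul]
  rw [C_add] at h₁₂
  linear_combination frobEval p (negLaguerre t₂) * frobEval p (negLaguerre (t₁ + t₂)) * h₁
    + frobEval p (negLaguerre t₁) * frobEval p (negLaguerre (t₁ + t₂)) * h₂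
    - frobEval p (negLaguerre t₁) * frobEval p (negLaguerre t₂) * h₁₂

theorem frobEval_negLaguerre_mul {t₁ t₂ : ZMod p} (h : t₁ + t₂ ≠ 0) :
    frobEval p (negLaguerre t₁ * negLaguerre t₂) =
      expand (ZMod p) p ((negLaguerre t₁ * negLaguerre t₂).coeff (p - 1))
        * frobEval p (negLaguerre (t₁ + t₂)) := by
  refine frobEval_eq_expand_coeff_mul p ?_ (natDegree_negLaguerre_lt _) (coeff_negLaguerre_pred h)
    (derivative_mul_pow_pred_eq_zero p (derivative_frobEval_negLaguerre_mul t₁ t₂))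
  have h₁ := natDegree_negLaguerre_lt t₁
  have h₂ := natDegree_negLaguerre_lt t₂
  have := natDegree_mul_le (p := negLaguerre t₁) (q := negLaguerre t₂)
  omega

theorem dvd_negLaguerre_mul_sub {t₁ t₂ : ZMod p} (h : t₁ + t₂ ≠ 0) :
    X ^ p - C (mu p) ∣ negLaguerre t₁ * negLaguerre t₂
      - C ((negLaguerre t₁ * negLaguerre t₂).coeff (p - 1)) * negLaguerre (t₁ + t₂) :=
  dvd_of_frobEval_eq_zero p (by rw [map_sub, map_mul (frobEval p) (C _), frobEval_C,
    frobEval_negLaguerre_mul h, sub_self])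

end Laguerre

section RatFunc

variable {p : ℕ} [Fact p.Prime]

theorem algebraMap_mu :
    algebraMap (ZMod p)[X] (RatFunc (ZMod p)) (mu p) = RatFunc.X ^ p - RatFunc.X := by
  simp [mu, RatFunc.algebraMap_X]

theorem binomF_eq_algebraMap_fallingFact (n m : ℕ) :
    binomF ((n : RatFunc (ZMod p)) * RatFunc.X - 1) m =
      algebraMap (ZMod p)[X] (RatFunc (ZMod p)) (fallingFact (n : ZMod p) m) / m.factorial := by
  simp [binomF, descPochhammer_eval_eq_prod_range, fallingFact, map_prod, RatFunc.algebraMap_X]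

theorem map_negLaguerre (n : ℕ) :
    (negLaguerre (n : ZMod p)).map (algebraMap (ZMod p)[X] (RatFunc (ZMod p))) =
      -(Lag p ((n : RatFunc (ZMod p)) * RatFunc.X)).comp (C (n : RatFunc (ZMod p)) * X) := by
  rw [negLaguerre, Lag, Polynomial.map_sum, Polynomial.sum_comp, ← sum_neg_distrib]
  refine sum_congr rfl fun k hk => ?_
  have key := neg_one_pow_div_factorial_mul_factorial (K := RatFunc (ZMod p)) p (mem_range.1 hk)
  have hcoeff : algebraMap (ZMod p)[X] (RatFunc (ZMod p)) (fallingFact (n : ZMod p) (p - 1 - k)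
      * C (n : ZMod p) ^ k) = -(binomF ((n : RatFunc (ZMod p)) * RatFunc.X - 1) (p - 1 - k)
        * (-1) ^ k / k.factorial * (n : RatFunc (ZMod p)) ^ k) := by
    rw [binomF_eq_algebraMap_fallingFact, map_mul, map_pow, RatFunc.algebraMap_C, map_natCast]
    linear_combination algebraMap (ZMod p)[X] (RatFunc (ZMod p)) (fallingFact (n : ZMod p)
      (p - 1 - k)) * (n : RatFunc (ZMod p)) ^ k * key
  rw [Polynomial.map_mul, Polynomial.map_pow, map_X, map_C, mul_comp, C_comp, X_pow_comp, mul_pow,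
    hcoeff]
  simp only [C_neg, C_mul, C_pow]
  ring

theorem algebraMap_coeff_negLaguerre_mul (r s : ℕ) (hs : (s : ZMod p) ≠ 0) :
    algebraMap (ZMod p)[X] (RatFunc (ZMod p))
        ((negLaguerre (r : ZMod p) * negLaguerre (s : ZMod p)).coeff (p - 1)) =
      -bF p r s (RatFunc.X : RatFunc (ZMod p)) := by
  have hfermat : (s : RatFunc (ZMod p)) ^ (p - 1) = 1 := by
    simpa using congrArg (algebraMap (ZMod p) (RatFunc (ZMod p)))
      (ZMod.pow_card_sub_one_eq_one hs)
  rw [coeff_mul, Nat.sum_antidiagonal_eq_sum_range_succ (fun i j =>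
      (negLaguerre (r : ZMod p)).coeff i * (negLaguerre (s : ZMod p)).coeff j),
    Nat.succ_eq_add_one, Nat.sub_add_cancel (Fact.out : p.Prime).pos, bF, map_sum,
    ← sum_neg_distrib]
  refine sum_congr rfl fun k hk => ?_
  have hk := mem_range.1 hk
  have key := neg_one_pow_div_factorial_mul_factorial (K := RatFunc (ZMod p)) p hk
  have hinv : (s : RatFunc (ZMod p)) ^ (p - 1 - k) = ((s : RatFunc (ZMod p)) ^ k)⁻¹ :=
    eq_inv_of_mul_eq_one_left (by rw [← pow_add, Nat.sub_add_cancel (by omega), hfermat])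
  rw [coeff_negLaguerre _ hk, coeff_negLaguerre _ (by omega : p - 1 - k < p),
    Nat.sub_sub_self (by omega : k ≤ p - 1), binomF_eq_algebraMap_fallingFact,
    binomF_eq_algebraMap_fallingFact]
  simp only [map_mul, map_pow, map_natCast]
  rw [hinv]
  linear_combination algebraMap (ZMod p)[X] (RatFunc (ZMod p)) (fallingFact (r : ZMod p)
    (p - 1 - k)) * algebraMap (ZMod p)[X] (RatFunc (ZMod p)) (fallingFact (s : ZMod p) k)
    * (r : RatFunc (ZMod p)) ^ k * ((s : RatFunc (ZMod p)) ^ k)⁻¹ * key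

end RatFunc

end LaguerreCharP

theorem stmt7_general (p r s : ℕ) [Fact p.Prime]
    (hrp : r < p) (hs0 : 0 < s) (hsp : s < p) (hrs : r + s ≠ p) :
    (Polynomial.X ^ p -
        Polynomial.C ((RatFunc.X : RatFunc (ZMod p)) ^ p - RatFunc.X)) ∣
      ((Lag p ((r : RatFunc (ZMod p)) * RatFunc.X)).comp
            (Polynomial.C (r : RatFunc (ZMod p)) * Polynomial.X) *
          (Lag p ((s : RatFunc (ZMod p)) * RatFunc.X)).comp
            (Polynomial.C (s : RatFunc (ZMod p)) * Polynomial.X) -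
        Polynomial.C (bF p r s (RatFunc.X : RatFunc (ZMod p))) *
          (Lag p (((r + s : ℕ) : RatFunc (ZMod p)) * RatFunc.X)).comp
            (Polynomial.C ((r + s : ℕ) : RatFunc (ZMod p)) * Polynomial.X)) := by
  have hs : (s : ZMod p) ≠ 0 := by
    rw [Ne, ZMod.natCast_eq_zero_iff]
    exact Nat.not_dvd_of_pos_of_lt hs0 hsp
  have hrs' : (r : ZMod p) + s ≠ 0 := by
    rw [← Nat.cast_add, Ne, ZMod.natCast_eq_zero_iff]
    exact fun h => hrs (Nat.eq_of_dvd_of_lt_two_mul (by omega) h (by omega))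
  have h := map_dvd (mapRingHom (algebraMap (ZMod p)[X] (RatFunc (ZMod p))))
    (LaguerreCharP.dvd_negLaguerre_mul_sub hrs')
  rw [← Nat.cast_add (R := ZMod p)] at h
  simp only [coe_mapRingHom, Polynomial.map_sub, Polynomial.map_mul, Polynomial.map_pow, map_X,
    map_C, LaguerreCharP.algebraMap_mu, LaguerreCharP.map_negLaguerre,
    LaguerreCharP.algebraMap_coeff_negLaguerre_mul r s hs] at h
  convert h using 1
  rw [C_neg]
  ring

theorem stmt7 (p r s : ℕ) [Fact p.Prime] (hodd : Odd p)
    (hr0 : 0 < r) (hrp : r < p) (hs0 : 0 < s) (hsp : s < p) (hrs : r + s ≠ p) :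
    (Polynomial.X ^ p -
        Polynomial.C ((RatFunc.X : RatFunc (ZMod p)) ^ p - RatFunc.X)) ∣
      ((Lag p ((r : RatFunc (ZMod p)) * RatFunc.X)).comp
            (Polynomial.C (r : RatFunc (ZMod p)) * Polynomial.X) *
          (Lag p ((s : RatFunc (ZMod p)) * RatFunc.X)).comp
            (Polynomial.C (s : RatFunc (ZMod p)) * Polynomial.X) -
        Polynomial.C (bF p r s (RatFunc.X : RatFunc (ZMod p))) *
          (Lag p (((r + s : ℕ) : RatFunc (ZMod p)) * RatFunc.X)).comp
            (Polynomial.C ((r + s : ℕ) : RatFunc (ZMod p)) * Polynomial.X)) :=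
  stmt7_general p r s hrp hs0 hsp hrs
end

section
/- Let p be an odd prime and let r be an integer with 0 < r < p. Then in the polynomial ring F_p(α)[X] one has L_{p−1}^{(rα)}(rX) · L_{p−1}^{(−rα)}(−rX) ≡ 1 − α^{p−1} modulo the ideal generated by X^p − (α^p − α), where L_{p−1}^{(rα)}(rX) denotes the polynomial obtained from L_{p−1}^{(α)}(X) by substituting rα for the parameter and rX for the variable. -/
/-!
Over a field `K` of characteristic `p`, put `F = Lag p a`, `G = (Lag p (-a)).comp (-X)` and
`g = X ^ p - C (a ^ p - a)`. The `k`-th coefficient of `F` is `-∏_{k < i < p} (a + i)`; the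
recursion between consecutive coefficients says `X F' + (a - X) F = g`, and substituting `-a, -X`
gives `X G' + (X - a) G = -g`, so `X (F G)' = g (G - F)`. As `g' = 0`, the remainder `R` of
`F G` modulo `g` satisfies `g ∣ X R'`, which forces `R' = 0` for degree reasons, so `R` is a
constant. Comparing the coefficients of `X ^ 0` and `X ^ p` in `F G = g Q + R` gives
`R = F(0) G(0) + (a ^ p - a) [X ^ p](F G)`, where `[X ^ p](F G) = ∑_k ∏_{i ≠ k} (a + i)` is
the value at `a` of the derivative of `∏_{0 < i < p} (X + i) = X ^ (p - 1) - 1`. Hence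
`R = 1 - a ^ (p - 1)`. The theorem is the case `a = r α`, with `X` replaced by `r X`.
-/

open Polynomial Finset

noncomputable def lagCoeff (p : ℕ) {K : Type*} [Field K] (a : K) (k : ℕ) : K :=
  binomF (a - 1) (p - 1 - k) * (-1) ^ k / k.factorial

lemma Lag_eq_sum_lagCoeff (p : ℕ) {K : Type*} [Field K] (a : K) :
    Lag p a = ∑ k ∈ range p, C (lagCoeff p a k) * X ^ k :=
  rfl

lemma binomF_succ {K : Type*} [Field K] (f : K) (m : ℕ) :
    binomF f (m + 1) = binomF f m * (f - m) / (m + 1) := by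
  rw [binomF, binomF, descPochhammer_succ_eval, Nat.factorial_succ, Nat.cast_mul, Nat.cast_succ,
    div_mul_eq_mul_div, div_div, mul_comm (m.factorial : K)]

lemma Polynomial.coeff_mul_eq_sum_Ico {R : Type*} [Semiring R] {f g : R[X]} {n : ℕ}
    (hf : f.natDegree < n) (hg : g.natDegree < n) :
    (f * g).coeff n = ∑ k ∈ Ico 1 n, f.coeff k * g.coeff (n - k) := by
  rw [coeff_mul, Nat.sum_antidiagonal_eq_sum_range_succ (fun i j ↦ f.coeff i * g.coeff j),
    sum_range_succ, sum_range_eq_add_Ico _ (by omega), coeff_eq_zero_of_natDegree_lt hf,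
    Nat.sub_zero, coeff_eq_zero_of_natDegree_lt hg]
  simp

lemma Polynomial.modByMonic_X_pow_sub_C_eq_C {R : Type*} [CommRing R] {n : ℕ} (hn : n ≠ 0)
    {c r : R} {H : R[X]} (hH : H.natDegree < 2 * n) (hr : H %ₘ (X ^ n - C c) = C r) :
    r = H.coeff 0 + c * H.coeff n := by
  nontriviality R
  have hdiv := modByMonic_add_div H (X ^ n - C c)
  set Q := H /ₘ (X ^ n - C c)
  have hQ : Q.coeff n = 0 := by
    refine coeff_eq_zero_of_natDegree_lt ?_
    rw [natDegree_divByMonic H (monic_X_pow_sub_C c hn), natDegree_X_pow_sub_C]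
    omega
  have h₀ := congrArg (coeff · 0) hdiv
  have hₙ := congrArg (coeff · n) hdiv
  simp only [hr, coeff_add, coeff_C, sub_mul, coeff_sub, coeff_X_pow_mul', coeff_C_mul,
    if_true, if_false, le_refl, Nat.sub_self, Nat.le_zero, hn] at h₀ hₙ
  linear_combination h₀ + c * hₙ + c ^ 2 * hQ

section CharP

variable {p : ℕ} {K : Type*} [Field K] [CharP K p]

lemma natCast_sub_eq_neg {n : ℕ} (hn : n ≤ p) : ((p - n : ℕ) : K) = -n := by
  rw [Nat.cast_sub hn, CharP.cast_eq_zero, zero_sub]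

lemma lagCoeff_eq_mul_lagCoeff_succ (a : K) {k : ℕ} (hk : k + 2 ≤ p) :
    lagCoeff p a k = (a + (k + 1)) * lagCoeff p a (k + 1) := by
  have hm : p - 1 - k = p - 1 - (k + 1) + 1 := by omega
  have hcast : ((p - 1 - (k + 1) : ℕ) : K) = -(k + 2) := by
    rw [Nat.sub_sub, show 1 + (k + 1) = k + 2 by ring, natCast_sub_eq_neg (by omega)]
    push_cast; ring
  rw [lagCoeff, lagCoeff, hm, binomF_succ, hcast, Nat.factorial_succ, Nat.cast_mul, pow_succ]
  push_cast
  simp only [div_eq_mul_inv, mul_inv, show -(k + 2 : K) + 1 = -(k + 1) by ring, inv_neg]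
  ring

lemma Polynomial.eq_C_of_derivative_eq_zero_of_natDegree_lt {f : K[X]} (hf : f.natDegree < p)
    (hd : derivative f = 0) : f = C (f.coeff 0) := by
  ext (_ | n)
  · simp
  rw [coeff_C, if_neg n.succ_ne_zero]
  by_cases hn : n + 1 < p
  · have h := coeff_derivative f n
    rw [hd, coeff_zero, eq_comm, mul_eq_zero] at h
    refine h.resolve_right ?_
    exact_mod_cast (CharP.cast_eq_zero_iff K p (n + 1)).not.mpr
      (Nat.not_dvd_of_pos_of_lt n.succ_pos hn)
  · exact coeff_eq_zero_of_natDegree_lt (by omega)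

variable [hp : Fact p.Prime]

lemma natCast_pow_sub_one_eq_one {n : ℕ} (hn : ¬p ∣ n) : (n : K) ^ (p - 1) = 1 := by
  have hn' : (n : ZMod p) ≠ 0 := by rwa [Ne, ZMod.natCast_eq_zero_iff]
  simpa using congrArg (ZMod.castHom dvd_rfl K) (ZMod.pow_card_sub_one_eq_one hn')

lemma factorial_sub_one_eq_neg_one : ((p - 1).factorial : K) = -1 := by
  rw [← map_natCast (ZMod.castHom dvd_rfl K), ZMod.wilsons_lemma, map_neg, map_one]

lemma neg_one_pow_sub_one_eq_one : (-1 : K) ^ (p - 1) = 1 := by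
  have h := neg_one_pow_char K p
  rw [← Nat.sub_add_cancel hp.out.one_le, pow_succ] at h
  simpa using h

-- Both sides are monic of degree `p - 1` and vanish at `-1, …, -(p - 1)` (Fermat).
lemma prod_Ico_X_add_C_natCast : ∏ i ∈ Ico 1 p, (X + C (i : K)) = X ^ (p - 1) - 1 := by
  have hmonic : (∏ i ∈ Ico 1 p, (X + C (i : K))).Monic :=
    monic_prod_of_monic _ _ fun i _ ↦ monic_X_add_C _
  have hdeg : (∏ i ∈ Ico 1 p, (X + C (i : K))).natDegree = p - 1 := by
    rw [natDegree_prod_of_monic _ _ fun i _ ↦ monic_X_add_C _,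
      sum_congr rfl fun i _ ↦ natDegree_X_add_C ((i : ℕ) : K), sum_const, smul_eq_mul, mul_one,
      Nat.card_Ico]
  have hp1 : 0 < p - 1 := Nat.sub_pos_of_lt hp.out.one_lt
  have hX : (X ^ (p - 1) - 1 : K[X]).degree = (p - 1 : ℕ) := by
    simpa using degree_X_pow_sub_C hp1 (1 : K)
  refine (eq_of_degree_le_of_eval_index_eq (v := fun i : ℕ ↦ -(i : K)) (Ico 1 p)
    ?_ ?_ ?_ ?_ ?_).symm
  · intro i hi j hj hij
    simp only [coe_Ico, Set.mem_Ico, neg_inj] at hi hj hij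
    exact Nat.ModEq.eq_of_lt_of_lt ((CharP.natCast_eq_natCast K p).mp hij) hi.2 hj.2
  · rw [hX, Nat.card_Ico]
  · rw [hX, degree_eq_natDegree hmonic.ne_zero, hdeg]
  · rw [hmonic.leadingCoeff, leadingCoeff_X_pow_sub_one hp1]
  · intro i hi
    have hi' := mem_Ico.mp hi
    rw [eval_prod, prod_eq_zero hi (by simp), eval_sub, eval_pow, eval_X, eval_one, neg_pow,
      neg_one_pow_sub_one_eq_one, one_mul,
      natCast_pow_sub_one_eq_one (Nat.not_dvd_of_pos_of_lt hi'.1 hi'.2), sub_self]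

lemma prod_Ico_add_natCast (a : K) : ∏ i ∈ Ico 1 p, (a + i) = a ^ (p - 1) - 1 := by
  simpa [eval_prod] using congrArg (eval a) (prod_Ico_X_add_C_natCast (p := p) (K := K))

lemma sum_prod_erase_Ico_add_natCast (a : K) :
    ∑ k ∈ Ico 1 p, ∏ i ∈ (Ico 1 p).erase k, (a + i) = -a ^ (p - 2) := by
  have h := congrArg (fun f ↦ eval a (derivative f)) (prod_Ico_X_add_C_natCast (p := p) (K := K))
  simp only [derivative_prod_finset, derivative_X_add_C, mul_one, derivative_sub,
    derivative_X_pow, derivative_one, sub_zero, eval_finsetSum, eval_prod, eval_add, eval_X,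
    eval_C, eval_mul, eval_pow] at h
  rw [h, Nat.cast_pred hp.out.pos, CharP.cast_eq_zero, zero_sub, Nat.sub_sub]
  ring

lemma Polynomial.modByMonic_X_pow_sub_C_eq_C_of_dvd (c : K) {H : K[X]}
    (h : X ^ p - C c ∣ X * derivative H) :
    H %ₘ (X ^ p - C c) = C ((H %ₘ (X ^ p - C c)).coeff 0) := by
  have hmonic := monic_X_pow_sub_C c hp.out.ne_zero
  set R := H %ₘ (X ^ p - C c)
  have hne : X ^ p - C c ≠ 1 := fun h ↦
    hp.out.ne_zero (by simpa [h] using (natDegree_X_pow_sub_C (n := p) (r := c)).symm)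
  have hR : R.natDegree < p := by
    simpa [natDegree_X_pow_sub_C] using natDegree_modByMonic_lt H hmonic hne
  have hderiv : X * derivative H =
      X * derivative R + (X ^ p - C c) * (X * derivative (H /ₘ (X ^ p - C c))) := by
    conv_lhs => rw [← modByMonic_add_div H (X ^ p - C c)]
    simp only [derivative_add, derivative_mul, derivative_sub, derivative_X_pow, derivative_C,
      CharP.cast_eq_zero, map_zero, zero_mul, sub_zero, zero_add]
    ring
  have hXR : X * derivative R = 0 := by
    refine eq_zero_of_dvd_of_natDegree_lt ((dvd_add_left (dvd_mul_right _ _)).mp (hderiv ▸ h)) ?_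
    have hmul := natDegree_mul_le (p := X) (q := derivative R)
    rw [natDegree_X] at hmul
    have := natDegree_derivative_le R
    have := hp.out.two_le
    rw [natDegree_X_pow_sub_C]
    omega
  exact eq_C_of_derivative_eq_zero_of_natDegree_lt hR ((mul_eq_zero.mp hXR).resolve_left X_ne_zero)

lemma Polynomial.X_pow_sub_C_dvd_sub_C_of_dvd_X_mul_derivative (c : K) {H : K[X]}
    (hH : H.natDegree < 2 * p) (h : X ^ p - C c ∣ X * derivative H) :
    X ^ p - C c ∣ H - C (H.coeff 0 + c * H.coeff p) := by
  have hrem := modByMonic_X_pow_sub_C_eq_C_of_dvd c h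
  rw [← modByMonic_X_pow_sub_C_eq_C hp.out.ne_zero hH hrem, ← hrem, modByMonic_eq_sub_mul_div]
  exact ⟨H /ₘ (X ^ p - C c), by ring⟩

lemma lagCoeff_eq_neg_prod (a : K) {k : ℕ} (hk : k < p) :
    lagCoeff p a k = -∏ i ∈ Ico (k + 1) p, (a + i) := by
  replace hk : k ≤ p - 1 := Nat.le_sub_one_of_lt hk
  induction hk using Nat.decreasingInduction with
  | self =>
    rw [lagCoeff, Nat.sub_self, Nat.sub_add_cancel hp.out.one_le, Ico_self, prod_empty, binomF,
      descPochhammer_zero, eval_one, Nat.factorial_zero, Nat.cast_one, div_one, one_mul,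
      neg_one_pow_sub_one_eq_one, factorial_sub_one_eq_neg_one, one_div_neg_one_eq_neg_one]
  | of_succ k hk ih =>
    rw [lagCoeff_eq_mul_lagCoeff_succ a (by omega), ih,
      prod_eq_prod_Ico_succ_bot (show k + 1 < p by omega)]
    push_cast; ring

lemma coeff_Lag (a : K) (n : ℕ) :
    (Lag p a).coeff n = if n < p then -∏ i ∈ Ico (n + 1) p, (a + i) else 0 := by
  simp only [Lag_eq_sum_lagCoeff, finsetSum_coeff, coeff_C_mul_X_pow, sum_ite_eq, mem_range]
  split_ifs with hn
  · exact lagCoeff_eq_neg_prod a hn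
  · rfl

lemma coeff_Lag_zero (a : K) : (Lag p a).coeff 0 = 1 - a ^ (p - 1) := by
  rw [coeff_Lag, if_pos hp.out.pos, zero_add, prod_Ico_add_natCast, neg_sub]

lemma natDegree_Lag_lt (a : K) : (Lag p a).natDegree < p := by
  refine (natDegree_le_iff_coeff_eq_zero.mpr fun n hn ↦ ?_).trans_lt
    (Nat.sub_lt hp.out.pos one_pos)
  rw [coeff_Lag, if_neg (by omega)]

lemma coeff_Lag_neg_comp_neg (a : K) (n : ℕ) :
    ((Lag p (-a)).comp (-X)).coeff n = if n < p then -∏ j ∈ Ico 1 (p - n), (a + j) else 0 := by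
  rw [show (-X : K[X]) = C (-1) * X by simp, comp_C_mul_X_coeff, coeff_Lag]
  split_ifs with hn
  · have hreflect : ∏ i ∈ Ico (n + 1) p, (-a + i) = ∏ j ∈ Ico 1 (p - n), -(a + j) := by
      have h := prod_Ico_reflect (fun i : ℕ ↦ -a + i) 1 (by omega : p - n ≤ p + 1)
      rw [show p + 1 - (p - n) = n + 1 by omega, Nat.add_sub_cancel] at h
      rw [← h]
      refine prod_congr rfl fun j hj ↦ ?_
      rw [natCast_sub_eq_neg (by simp only [mem_Ico] at hj; omega), neg_add]
    rw [hreflect, prod_neg, Nat.card_Ico, neg_mul, mul_right_comm, ← pow_add,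
      show p - n - 1 + n = p - 1 by omega, neg_one_pow_sub_one_eq_one, one_mul]
  · rw [zero_mul]

lemma natDegree_Lag_neg_comp_neg_lt (a : K) : ((Lag p (-a)).comp (-X)).natDegree < p :=
  natDegree_comp_le.trans_lt (by simpa using natDegree_Lag_lt (-a))

lemma coeff_Lag_mul_Lag_neg_comp_neg (a : K) :
    (Lag p a * (Lag p (-a)).comp (-X)).coeff p = -a ^ (p - 2) := by
  rw [coeff_mul_eq_sum_Ico (natDegree_Lag_lt a) (natDegree_Lag_neg_comp_neg_lt a),
    ← sum_prod_erase_Ico_add_natCast]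
  refine sum_congr rfl fun k hk ↦ ?_
  rw [mem_Ico] at hk
  have hsplit : (Ico 1 p).erase k = Ico (k + 1) p ∪ Ico 1 k := by
    ext; simp only [mem_erase, mem_Ico, mem_union]; omega
  have hdisj : Disjoint (Ico (k + 1) p) (Ico 1 k) :=
    disjoint_left.mpr fun x h₁ h₂ ↦ by simp only [mem_Ico] at h₁ h₂; omega
  rw [coeff_Lag, if_pos hk.2, coeff_Lag_neg_comp_neg, if_pos (by omega), Nat.sub_sub_self hk.2.le,
    hsplit, prod_union hdisj, neg_mul_neg]

lemma X_mul_derivative_Lag (a : K) :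
    X * derivative (Lag p a) + (C a - X) * Lag p a = X ^ p - C (a ^ p - a) := by
  ext n
  simp only [coeff_add, coeff_sub, sub_mul, coeff_C_mul, coeff_X_pow, coeff_C]
  rcases n with _ | n
  · rw [coeff_X_mul_zero, coeff_X_mul_zero, coeff_Lag_zero, if_neg hp.out.ne_zero.symm,
      if_pos rfl, ← Nat.sub_add_cancel hp.out.one_le, pow_succ', Nat.add_sub_cancel]
    ring
  · rw [coeff_X_mul, coeff_X_mul, coeff_derivative, coeff_Lag, coeff_Lag, if_neg n.succ_ne_zero]
    rcases lt_trichotomy (n + 1) p with hn | hn | hn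
    · rw [if_pos hn, if_pos (by omega), if_neg hn.ne, prod_eq_prod_Ico_succ_bot hn]
      push_cast; ring
    · rw [if_neg hn.not_lt, if_pos (by omega), if_pos hn, hn, Ico_self, prod_empty]
      ring
    · rw [if_neg (by omega), if_neg (by omega), if_neg hn.ne']
      ring

lemma X_mul_derivative_Lag_neg_comp_neg (a : K) :
    X * derivative ((Lag p (-a)).comp (-X)) + (X - C a) * (Lag p (-a)).comp (-X) =
      -(X ^ p - C (a ^ p - a)) := by
  have h := congrArg (fun f ↦ f.comp (-X)) (X_mul_derivative_Lag (p := p) (-a))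
  simp only [add_comp, mul_comp, sub_comp, X_comp, C_comp, pow_comp] at h
  rw [neg_pow (X : K[X]), neg_pow a, neg_one_pow_char, neg_one_pow_char, neg_one_mul, neg_one_mul,
    map_sub, map_neg, map_neg] at h
  rw [derivative_comp, derivative_neg, derivative_X, map_sub]
  linear_combination h

lemma X_mul_derivative_Lag_mul_Lag_neg_comp_neg (a : K) :
    X * derivative (Lag p a * (Lag p (-a)).comp (-X)) =
      (X ^ p - C (a ^ p - a)) * ((Lag p (-a)).comp (-X) - Lag p a) := by
  rw [derivative_mul]
  linear_combination (Lag p (-a)).comp (-X) * X_mul_derivative_Lag (p := p) a +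
    Lag p a * X_mul_derivative_Lag_neg_comp_neg (p := p) a

theorem X_pow_sub_C_dvd_Lag_mul_Lag_neg_comp_neg (a : K) :
    X ^ p - C (a ^ p - a) ∣ Lag p a * (Lag p (-a)).comp (-X) - C (1 - a ^ (p - 1)) := by
  have hdeg : (Lag p a * (Lag p (-a)).comp (-X)).natDegree < 2 * p := by
    have := natDegree_Lag_lt (p := p) a
    have := natDegree_Lag_neg_comp_neg_lt (p := p) a
    exact natDegree_mul_le.trans_lt (by omega)
  have h := X_pow_sub_C_dvd_sub_C_of_dvd_X_mul_derivative _ hdeg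
    ⟨_, X_mul_derivative_Lag_mul_Lag_neg_comp_neg a⟩
  have hconst : (Lag p a * (Lag p (-a)).comp (-X)).coeff 0 +
      (a ^ p - a) * (Lag p a * (Lag p (-a)).comp (-X)).coeff p = 1 - a ^ (p - 1) := by
    rw [mul_coeff_zero, coeff_Lag_zero, coeff_Lag_neg_comp_neg, if_pos hp.out.pos, Nat.sub_zero,
      prod_Ico_add_natCast, coeff_Lag_mul_Lag_neg_comp_neg]
    obtain ⟨q, rfl⟩ : ∃ q, p = q + 2 := ⟨p - 2, by have := hp.out.two_le; omega⟩
    simp only [Nat.add_sub_cancel, show q + 2 - 1 = q + 1 by omega]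
    ring
  rwa [hconst] at h

end CharP

theorem stmt8_general (p r : ℕ) [Fact p.Prime] (hr0 : 0 < r) (hrp : r < p) :
    (Polynomial.X ^ p -
        Polynomial.C ((RatFunc.X : RatFunc (ZMod p)) ^ p - RatFunc.X)) ∣
      ((Lag p ((r : RatFunc (ZMod p)) * RatFunc.X)).comp
            (Polynomial.C (r : RatFunc (ZMod p)) * Polynomial.X) *
          (Lag p (-((r : RatFunc (ZMod p)) * RatFunc.X))).comp
            (Polynomial.C (-(r : RatFunc (ZMod p))) * Polynomial.X) -
        Polynomial.C (1 - (RatFunc.X : RatFunc (ZMod p)) ^ (p - 1))) := by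
  set α : RatFunc (ZMod p) := RatFunc.X
  set ρ : RatFunc (ZMod p) := (r : RatFunc (ZMod p))
  have hρ : ρ ^ (p - 1) = 1 := natCast_pow_sub_one_eq_one (Nat.not_dvd_of_pos_of_lt hr0 hrp)
  have hρp : ρ ^ p = ρ := by rw [← pow_sub_one_mul (hr0.trans hrp).ne', hρ, one_mul]
  have h := map_dvd (compRingHom (C ρ * X)) (X_pow_sub_C_dvd_Lag_mul_Lag_neg_comp_neg (ρ * α))
  simp only [coe_compRingHom_apply, sub_comp, mul_comp, C_comp, pow_comp, X_comp, neg_comp,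
    comp_assoc, mul_pow, ← C_pow, hρp, hρ, one_mul] at h
  rw [map_neg, neg_mul]
  refine dvd_trans ⟨C ρ, ?_⟩ h
  simp only [map_sub, map_mul]
  ring

theorem stmt8 (p r : ℕ) [Fact p.Prime] (hodd : Odd p) (hr0 : 0 < r) (hrp : r < p) :
    (Polynomial.X ^ p -
        Polynomial.C ((RatFunc.X : RatFunc (ZMod p)) ^ p - RatFunc.X)) ∣
      ((Lag p ((r : RatFunc (ZMod p)) * RatFunc.X)).comp
            (Polynomial.C (r : RatFunc (ZMod p)) * Polynomial.X) *
          (Lag p (-((r : RatFunc (ZMod p)) * RatFunc.X))).comp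
            (Polynomial.C (-(r : RatFunc (ZMod p))) * Polynomial.X) -
        Polynomial.C (1 - (RatFunc.X : RatFunc (ZMod p)) ^ (p - 1))) :=
  stmt8_general p r hr0 hrp
end
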